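/- Let ℙ be a stationary simple point process on ℝ^d such that ‖ℙ(ξ(Λ_{1/2}) = 0 | 𝒯_k) − ℙ(ξ(Λ_{1/2}) = 0)‖_∞ → 0 as k → ∞, where 𝒯_k is the σ-algebra generated by ξ outside Λ_k, and ℙ(ξ = ∅) = 0. Then there exists c > 0 such that ℙ(ξ(Λ_ℓ) = 0) ≤ e^{-cℓ^d} for all ℓ ≥ 1. -/

import Mathlib

open MeasureTheory ENNReal
noncomputable section

abbrev E (d : ℕ) : Type := EuclideanSpace ℝ (Fin d)

def locFin {d : ℕ} (ξ : Set (E d)) : Prop := ∀ r : ℝ, (ξ ∩ Metric.closedBall 0 r).Finite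

def shift {d : ℕ} (x : E d) (s : Set (E d)) : Set (E d) := (fun y => y - x) '' s

def lam0 {d : ℕ} (ℓ : ℝ) : Set (E d) := {y | ∀ i, |y i| ≤ ℓ}

/-- The σ-algebra `𝒯_a` of events determined by the configuration outside `Λ_a`. -/
def tailSigma (d : ℕ) [m0 : MeasurableSpace (Set (E d))] (a : ℝ) :
    MeasurableSpace (Set (E d)) :=
  MeasurableSpace.comap (fun s : Set (E d) => s ∩ (lam0 a)ᶜ) m0

/-- Indicator of the void event `ξ(Λ_{1/2}) = 0`. -/
def voidInd {d : ℕ} (s : Set (E d)) : ℝ := Set.indicator {s : Set (E d) | s ∩ lam0 (1/2) = ∅} (fun _ => 1) s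

/-!
Choose `n` so large that, given the configuration outside `Λ_n`, the conditional probability of
`ξ(Λ_{1/2}) = 0` is a.e. at most some `γ < 1`; this is possible when the void probability `q` lies
strictly between `0` and `1` (`q = 0` is trivial, and `q = 1` would make every lattice cube empty
almost surely, i.e. `ξ = ∅`). Place in `Λ_ℓ` a grid of `⌊ℓ / (2n+1)⌋^d` points with spacing `2n+1`.
If `Λ_ℓ` is empty, so is the box of radius `n` around each grid point. Removing the grid points one
at a time, stationarity moves the current point to the origin, where the boxes around the others
lie outside `Λ_n`, so conditioning on them costs a factor `γ`. Hence the void probability is at most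
`γ ^ ⌊ℓ / (2n+1)⌋^d ≤ e^{-cℓ^d}`.
-/

open scoped Pointwise

lemma le_and_integrable_of_ae_condExp_ne_zero {α : Type*} {m m₀ : MeasurableSpace α}
    {μ : Measure[m₀] α} [NeZero μ] {f : α → ℝ} (h : ∀ᵐ x ∂μ, μ[f | m] x ≠ 0) :
    m ≤ m₀ ∧ Integrable f μ := by
  have hnot : ¬ μ[f | m] = 0 := fun h0 => by simpa [h0] using h.exists
  exact ⟨not_not.1 fun hm => hnot (condExp_of_not_le hm),
    not_not.1 fun hf => hnot (condExp_of_not_integrable hf)⟩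

lemma div_two_pow_le_max_floor_pow {x : ℝ} (hx : 0 ≤ x) (d : ℕ) :
    (x / 2) ^ d ≤ (max 1 (⌊x⌋₊ ^ d) : ℕ) := by
  rcases lt_or_ge x 1 with hx1 | hx1
  · calc (x / 2) ^ d ≤ 1 := pow_le_one₀ (by positivity) (by linarith)
      _ ≤ _ := by exact_mod_cast le_max_left _ _
  · have hfloor : (1 : ℝ) ≤ ⌊x⌋₊ := by exact_mod_cast Nat.le_floor (by exact_mod_cast hx1)
    calc (x / 2) ^ d ≤ (⌊x⌋₊ : ℝ) ^ d := by
          gcongr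
          linarith [Nat.lt_floor_add_one x]
      _ ≤ _ := by exact_mod_cast le_max_right _ _

lemma pow_le_exp_neg_mul_pow {γ L x : ℝ} (hγ0 : 0 < γ) (hγ1 : γ < 1) (hL : 0 < L) {d N : ℕ}
    (hN : (x / L) ^ d ≤ N) : γ ^ N ≤ Real.exp (-(-Real.log γ / L ^ d * x ^ d)) := by
  have hexp : -(-Real.log γ / L ^ d * x ^ d) = (x / L) ^ d * Real.log γ := by
    rw [div_pow]
    field_simp
  rw [← Real.exp_log (pow_pos hγ0 N), Real.log_pow, hexp, Real.exp_le_exp]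
  exact mul_le_mul_of_nonpos_right hN (Real.log_nonpos hγ0.le hγ1.le)

namespace VoidProbability

section Geometry

variable {d : ℕ}

def voidSet (W : Set (E d)) : Set (Set (E d)) := {s | s ∩ W = ∅}

lemma voidSet_anti {V W : Set (E d)} (h : V ⊆ W) : voidSet W ⊆ voidSet V :=
  fun _ hs => Set.subset_eq_empty (Set.inter_subset_inter_right _ h) hs

lemma lam0_mono {a b : ℝ} (h : a ≤ b) : (lam0 a : Set (E d)) ⊆ lam0 b :=
  fun _ hy i => (hy i).trans h

lemma vadd_lam0_subset {a b : ℝ} {z : E d} (hz : z ∈ lam0 a) :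
    z +ᵥ (lam0 b : Set (E d)) ⊆ lam0 (a + b) := by
  rintro _ ⟨y, hy, rfl⟩ i
  exact (abs_add_le _ _).trans (add_le_add (hz i) (hy i))

lemma disjoint_vadd_lam0 {a b : ℝ} {z : E d} {i : Fin d} (h : a + b < |z i|) :
    Disjoint (z +ᵥ (lam0 a : Set (E d))) (lam0 b) := by
  refine Set.disjoint_left.2 ?_
  rintro _ ⟨y, hy, rfl⟩ hzy
  have hsum : |z i + y i| ≤ b := hzy i
  have : |z i| ≤ |z i + y i| + |y i| := by
    simpa using abs_sub (z i + y i) (y i)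
  linarith [hy i]

lemma shift_eq_vadd (x : E d) (s : Set (E d)) : shift x s = -x +ᵥ s := by
  simp only [shift, sub_eq_neg_add]
  rfl

lemma preimage_shift_preimage (x y : E d) (B : Set (Set (E d))) :
    shift x ⁻¹' (shift y ⁻¹' B) = shift (x + y) ⁻¹' B := by
  ext s
  simp only [Set.mem_preimage, shift_eq_vadd, vadd_vadd, neg_add_rev]

lemma preimage_shift_biInter (x : E d) (F : Finset (E d)) (A : Set (Set (E d))) :
    shift x ⁻¹' ⋂ y ∈ F, shift y ⁻¹' A = ⋂ y ∈ F, shift (x + y) ⁻¹' A := by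
  simp only [Set.preimage_iInter₂, preimage_shift_preimage]

lemma preimage_shift_voidSet (x : E d) (W : Set (E d)) :
    shift x ⁻¹' voidSet W = voidSet (x +ᵥ W) := by
  ext s
  have : (-x +ᵥ s) ∩ W = -x +ᵥ (s ∩ (x +ᵥ W)) := by
    rw [Set.vadd_set_inter, neg_vadd_vadd]
  simp only [Set.mem_preimage, voidSet, Set.mem_ofPred_eq, shift_eq_vadd, this,
    Set.vadd_set_eq_empty]

lemma inter_compl_mem_voidSet_iff {A W : Set (E d)} (h : Disjoint W A) (s : Set (E d)) :
    s ∩ Aᶜ ∈ voidSet W ↔ s ∈ voidSet W := by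
  simp only [voidSet, Set.mem_ofPred_eq, Set.inter_assoc,
    Set.inter_eq_right.2 h.subset_compl_right]

def roundPt (u : E d) : E d := WithLp.toLp 2 fun i => (round (u i) : ℝ)

lemma mem_roundPt_vadd_lam0 (u : E d) : u ∈ roundPt u +ᵥ (lam0 (1 / 2) : Set (E d)) := by
  refine ⟨u - roundPt u, fun i => ?_, add_sub_cancel _ _⟩
  exact abs_sub_round (u i)

lemma roundPt_mem_lam0 {n : ℕ} {u : E d} (hu : u ∈ lam0 n) : roundPt u ∈ lam0 n := by
  intro i
  have hlt : |(round (u i) : ℝ)| < n + 1 := by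
    have := abs_sub_abs_le_abs_sub (round (u i) : ℝ) (u i)
    linarith [hu i, abs_sub_round (u i), abs_sub_comm (u i) (round (u i) : ℝ)]
  have : |round (u i)| ≤ n := Int.lt_add_one_iff.1 (by exact_mod_cast hlt)
  show |(round (u i) : ℝ)| ≤ n
  exact_mod_cast this

lemma countable_range_roundPt : (Set.range (roundPt (d := d))).Countable :=
  (Set.countable_range fun v : Fin d → ℤ => (WithLp.toLp 2 fun i => (v i : ℝ) : E d)).mono
    (by rintro _ ⟨u, rfl⟩; exact ⟨_, rfl⟩)

/-- `voidSet (lam0 n)` itself need not be measurable; this countable intersection of translates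
of the basic void event lies inside it. -/
def latticeVoid (n : ℕ) : Set (Set (E d)) :=
  ⋂ z ∈ roundPt '' (lam0 n : Set (E d)), voidSet (z +ᵥ (lam0 (1 / 2) : Set (E d)))

lemma latticeVoid_subset (n : ℕ) : latticeVoid n ⊆ voidSet (lam0 (n : ℝ) : Set (E d)) := by
  intro s hs
  refine Set.eq_empty_of_forall_notMem fun u ⟨hus, hun⟩ => ?_
  have := Set.mem_iInter₂.1 hs _ (Set.mem_image_of_mem _ hun)
  exact Set.eq_empty_iff_forall_notMem.1 this u ⟨hus, mem_roundPt_vadd_lam0 u⟩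

def grid (M : ℝ) (m : ℕ) : Finset (E d) :=
  (Fintype.piFinset fun _ => Finset.range m).image fun v => WithLp.toLp 2 fun i => M * v i

lemma card_grid {M : ℝ} (hM : M ≠ 0) (m : ℕ) : (grid M m : Finset (E d)).card = m ^ d := by
  rw [grid, Finset.card_image_of_injective, Fintype.card_piFinset]
  · simp
  · intro v w h
    funext i
    simpa [hM] using congrFun (congrArg WithLp.ofLp h) i

lemma mem_lam0_of_mem_grid {M : ℝ} (hM : 0 ≤ M) {m : ℕ} {x : E d} (hx : x ∈ grid M m) :
    x ∈ lam0 (M * (m - 1)) := by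
  obtain ⟨v, hv, rfl⟩ := Finset.mem_image.1 hx
  intro i
  have hvi : v i + 1 ≤ m := Finset.mem_range.1 (Fintype.mem_piFinset.1 hv i)
  show |M * v i| ≤ M * (m - 1)
  rw [abs_of_nonneg (by positivity)]
  gcongr
  linarith [(Nat.cast_le (α := ℝ)).2 hvi, Nat.cast_succ (R := ℝ) (v i)]

lemma grid_pairwise {M : ℝ} (hM : 0 ≤ M) (m : ℕ) :
    ((grid M m : Finset (E d)) : Set (E d)).Pairwise fun x y => ∃ i, M ≤ |(y - x) i| := by
  rintro _ hx _ hy hxy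
  obtain ⟨v, -, rfl⟩ := Finset.mem_image.1 hx
  obtain ⟨w, -, rfl⟩ := Finset.mem_image.1 hy
  obtain ⟨i, hi⟩ := Function.ne_iff.1 fun h : v = w => hxy (h ▸ rfl)
  refine ⟨i, ?_⟩
  have h1 : (1 : ℝ) ≤ |(w i : ℝ) - v i| := by
    have := Int.one_le_abs (sub_ne_zero.2 (Nat.cast_injective.ne (Ne.symm hi) : (w i : ℤ) ≠ v i))
    exact_mod_cast this
  show M ≤ |M * w i - M * v i|
  rw [← mul_sub, abs_mul, abs_of_nonneg hM]
  exact le_mul_of_one_le_right hM h1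

lemma voidSet_subset_biInter_grid {n m : ℕ} {M ℓ : ℝ} (hM : n + 1 / 2 ≤ M) (hℓ : M * m ≤ ℓ) :
    voidSet (lam0 ℓ) ⊆ ⋂ x ∈ grid M m, shift x ⁻¹' latticeVoid (d := d) n := by
  intro s hs
  simp only [Set.mem_iInter₂, latticeVoid, Set.preimage_iInter₂, preimage_shift_voidSet]
  rintro x hx _ ⟨u, hu, rfl⟩
  refine voidSet_anti ?_ hs
  have hxz : x + roundPt u ∈ lam0 (M * (m - 1) + n) :=
    vadd_lam0_subset (mem_lam0_of_mem_grid (by linarith [(n.cast_nonneg : (0 : ℝ) ≤ n)]) hx)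
      (Set.vadd_mem_vadd_set (roundPt_mem_lam0 hu))
  rw [vadd_vadd]
  refine (vadd_lam0_subset hxz).trans (lam0_mono ?_)
  linarith [mul_sub_one M (m : ℝ)]

end Geometry

section Probability

variable {d : ℕ} [m0 : MeasurableSpace (Set (E d))] {P : Measure (Set (E d))}

def IsStationary (P : Measure (Set (E d))) : Prop := ∀ x : E d, Measure.map (shift x) P = P

lemma IsStationary.aemeasurable_shift [NeZero P] (hP : IsStationary P) (x : E d) :
    AEMeasurable (shift x) P := by
  by_contra h
  exact NeZero.ne P (by rw [← hP x, Measure.map_of_not_aemeasurable h])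

lemma IsStationary.measure_shift_preimage_le [NeZero P] (hP : IsStationary P) (x : E d)
    (B : Set (Set (E d))) : P (shift x ⁻¹' B) ≤ P B := by
  simpa only [hP x] using Measure.le_map_apply (hP.aemeasurable_shift x) B

lemma IsStationary.nullMeasurableSet_shift_preimage [NeZero P] (hP : IsStationary P) (x : E d)
    {B : Set (Set (E d))} (hB : NullMeasurableSet B P) :
    NullMeasurableSet (shift x ⁻¹' B) P := by
  have hB' : AEMeasurable (B.indicator fun _ => (1 : ℝ)) (Measure.map (shift x) P) :=
    (aemeasurable_indicator_const_iff 1).2 (by rwa [hP x])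
  exact (aemeasurable_indicator_const_iff 1).1 (hB'.comp_aemeasurable (hP.aemeasurable_shift x))

lemma nullMeasurableSet_voidSet_half (hint : Integrable voidInd P) :
    NullMeasurableSet (voidSet (lam0 (1 / 2) : Set (E d))) P :=
  (aemeasurable_indicator_const_iff 1).1 hint.aemeasurable

lemma IsStationary.nullMeasurableSet_voidSet_vadd [NeZero P] (hP : IsStationary P)
    (hint : Integrable voidInd P) (z : E d) :
    NullMeasurableSet (voidSet (z +ᵥ (lam0 (1 / 2) : Set (E d)))) P := by
  rw [← preimage_shift_voidSet]
  exact hP.nullMeasurableSet_shift_preimage z (nullMeasurableSet_voidSet_half hint)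

variable [IsProbabilityMeasure P] {a γ : ℝ}

lemma measure_voidSet_half_inter_le (hm : tailSigma d a ≤ m0) (hint : Integrable voidInd P)
    (hγ : 0 ≤ γ) (hφ : ∀ᵐ s ∂P, P[voidInd | tailSigma d a] s ≤ γ) {S : Set (Set (E d))}
    (hS : MeasurableSet[tailSigma d a] S) :
    P (voidSet (lam0 (1 / 2)) ∩ S) ≤ ENNReal.ofReal γ * P S := by
  have hV := (nullMeasurableSet_voidSet_half hint).mono (Measure.restrict_le_self (s := S))
  have hreal : P.real (voidSet (lam0 (1 / 2)) ∩ S) ≤ γ * P.real S :=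
    calc P.real (voidSet (lam0 (1 / 2)) ∩ S)
        = ∫ s in S, (voidSet (lam0 (1 / 2))).indicator (fun _ => (1 : ℝ)) s ∂P := by
          rw [integral_indicator₀ hV, setIntegral_const, smul_eq_mul, mul_one,
            measureReal_restrict_apply₀ hV]
      _ = ∫ s in S, voidInd s ∂P := rfl
      _ = ∫ s in S, P[voidInd | tailSigma d a] s ∂P := (setIntegral_condExp hm hint hS).symm
      _ ≤ ∫ _ in S, γ ∂P :=
          setIntegral_mono_ae_restrict integrable_condExp.integrableOn
            (integrableOn_const (measure_ne_top P S)) (ae_restrict_of_ae hφ)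
      _ = γ * P.real S := by rw [setIntegral_const, smul_eq_mul, mul_comm]
  rw [← ofReal_measureReal, ← ofReal_measureReal, ← ENNReal.ofReal_mul hγ]
  exact ENNReal.ofReal_le_ofReal hreal

/-- On `ξ(Λ_a) = 0` the configuration equals its part outside `Λ_a`, so there `B` agrees with the
tail event obtained from a measurable kernel of `B`. -/
lemma measure_voidSet_inter_le_of_tail (ha : 1 / 2 ≤ a) (hm : tailSigma d a ≤ m0)
    (hint : Integrable voidInd P) (hγ : 0 ≤ γ)
    (hφ : ∀ᵐ s ∂P, P[voidInd | tailSigma d a] s ≤ γ) {B : Set (Set (E d))}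
    (hB : NullMeasurableSet B P) (hsat : ∀ s, s ∩ (lam0 a)ᶜ ∈ B → s ∈ B) :
    P (voidSet (lam0 a) ∩ B) ≤ ENNReal.ofReal γ * P B := by
  obtain ⟨G, hGB, hG, hGae⟩ := hB.exists_measurable_subset_ae_eq
  set S := (fun s : Set (E d) => s ∩ (lam0 a)ᶜ) ⁻¹' G
  have hS : MeasurableSet[tailSigma d a] S := ⟨G, hG, rfl⟩
  have hcover : voidSet (lam0 a) ∩ B ⊆ (voidSet (lam0 (1 / 2)) ∩ S) ∪ (B \ G) := by
    rintro s ⟨hs, hsB⟩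
    by_cases hsG : s ∈ G
    · have hfix : s ∩ (lam0 a)ᶜ = s :=
        Set.inter_eq_left.2 (Set.subset_compl_iff_disjoint_right.2
          (Set.disjoint_iff_inter_eq_empty.2 hs))
      exact Or.inl ⟨voidSet_anti (lam0_mono ha) hs, by simpa [S, hfix] using hsG⟩
    · exact Or.inr ⟨hsB, hsG⟩
  calc P (voidSet (lam0 a) ∩ B)
      ≤ P (voidSet (lam0 (1 / 2)) ∩ S) + P (B \ G) :=
        (measure_mono hcover).trans (measure_union_le _ _)
    _ = P (voidSet (lam0 (1 / 2)) ∩ S) := by rw [(ae_eq_set.1 hGae).2, add_zero]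
    _ ≤ ENNReal.ofReal γ * P S := measure_voidSet_half_inter_le hm hint hγ hφ hS
    _ ≤ ENNReal.ofReal γ * P B := by gcongr; exact fun s hs => hsat s (hGB hs)

theorem IsStationary.measure_biInter_shift_preimage_le (hP : IsStationary P)
    {A : Set (Set (E d))} {far : E d → Prop} {c : ℝ≥0∞}
    (hstep : ∀ F : Finset (E d), (∀ y ∈ F, far y) →
      P (A ∩ ⋂ y ∈ F, shift y ⁻¹' A) ≤ c * P (⋂ y ∈ F, shift y ⁻¹' A))
    (F : Finset (E d)) (hF : (F : Set (E d)).Pairwise fun x y => far (y - x)) :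
    P (⋂ x ∈ F, shift x ⁻¹' A) ≤ c ^ F.card := by
  classical
  induction F using Finset.induction_on with
  | empty => simp
  | insert x F hx ih =>
    rw [Finset.coe_insert, Set.pairwise_insert] at hF
    set G := F.image (· - x)
    have hG : ⋂ y ∈ G, shift y ⁻¹' A = shift (-x) ⁻¹' ⋂ y ∈ F, shift y ⁻¹' A := by
      simp only [G, Finset.set_biInter_finset_image, preimage_shift_biInter, neg_add_eq_sub]
    have hsplit :
        ⋂ y ∈ insert x F, shift y ⁻¹' A = shift x ⁻¹' (A ∩ ⋂ y ∈ G, shift y ⁻¹' A) := by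
      simp only [hG, Set.preimage_inter, Set.preimage_iInter₂, preimage_shift_preimage,
        add_neg_cancel_left, Finset.set_biInter_insert]
    have hfar : ∀ y ∈ G, far y := by
      simp only [G, Finset.mem_image]
      rintro _ ⟨y, hy, rfl⟩
      exact (hF.2 y hy (ne_of_mem_of_not_mem hy hx).symm).1
    calc P (⋂ y ∈ insert x F, shift y ⁻¹' A)
        ≤ P (A ∩ ⋂ y ∈ G, shift y ⁻¹' A) := by
          rw [hsplit]; exact hP.measure_shift_preimage_le _ _
      _ ≤ c * P (⋂ y ∈ G, shift y ⁻¹' A) := hstep G hfar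
      _ ≤ c * P (⋂ y ∈ F, shift y ⁻¹' A) := by
          rw [hG]; gcongr c * ?_; exact hP.measure_shift_preimage_le _ _
      _ ≤ c * c ^ F.card := by gcongr; exact ih hF.1
      _ = c ^ (insert x F).card := by rw [Finset.card_insert_of_notMem hx, pow_succ']

lemma IsStationary.measure_latticeVoid_inter_le {n : ℕ} (hn : 1 ≤ n) (hP : IsStationary P)
    (hm : tailSigma d n ≤ m0) (hint : Integrable voidInd P) (hγ : 0 ≤ γ)
    (hφ : ∀ᵐ s ∂P, P[voidInd | tailSigma d n] s ≤ γ) (F : Finset (E d))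
    (hfar : ∀ y ∈ F, ∃ i, 2 * n + 1 ≤ |y i|) :
    P (latticeVoid n ∩ ⋂ y ∈ F, shift y ⁻¹' latticeVoid n) ≤
      ENNReal.ofReal γ * P (⋂ y ∈ F, shift y ⁻¹' latticeVoid n) := by
  have hB : ⋂ y ∈ F, shift y ⁻¹' latticeVoid n = ⋂ y ∈ F, ⋂ z ∈ roundPt '' (lam0 n : Set (E d)),
      voidSet ((y + z) +ᵥ (lam0 (1 / 2) : Set (E d))) := by
    simp only [latticeVoid, Set.preimage_iInter₂, preimage_shift_voidSet, vadd_vadd]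
  refine (measure_mono (Set.inter_subset_inter_left _ (latticeVoid_subset n))).trans ?_
  rw [hB]
  have hn' : (1 / 2 : ℝ) ≤ n := by
    have : (1 : ℝ) ≤ n := by exact_mod_cast hn
    linarith
  refine measure_voidSet_inter_le_of_tail hn' hm hint hγ hφ ?_ ?_
  · exact .biInter F.countable_toSet fun y _ =>
      .biInter (countable_range_roundPt.mono (Set.image_subset_range _ _)) fun z _ =>
        hP.nullMeasurableSet_voidSet_vadd hint _
  · intro s hs
    simp only [Set.mem_iInter₂] at hs ⊢
    rintro y hy _ ⟨u, hu, rfl⟩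
    obtain ⟨i, hi⟩ := hfar y hy
    have hz := roundPt_mem_lam0 hu i
    have : 1 / 2 + n < |(y + roundPt u) i| := by
      have := abs_sub_abs_le_abs_sub (y i) (-(roundPt u) i)
      simp only [abs_neg, sub_neg_eq_add] at this
      simp only [PiLp.add_apply]
      linarith
    exact (inter_compl_mem_voidSet_iff (disjoint_vadd_lam0 this) s).1 (hs y hy _ ⟨u, hu, rfl⟩)

/-- Every nonempty configuration meets some lattice cube, and by stationarity each lattice cube is
empty with the same probability as `Λ_{1/2}`. -/
lemma IsStationary.measure_voidSet_half_ne_one (hP : IsStationary P)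
    (hempty : P {s | s = ∅} = 0) (hint : Integrable voidInd P) :
    P (voidSet (lam0 (1 / 2))) ≠ 1 := by
  intro h1
  have hcompl : P (voidSet (lam0 (1 / 2)))ᶜ = 0 :=
    (prob_compl_eq_zero_iff₀ (nullMeasurableSet_voidSet_half hint)).2 h1
  set occupied := ⋃ z ∈ Set.range (roundPt (d := d)), (voidSet (z +ᵥ (lam0 (1 / 2) : Set (E d))))ᶜ
  have hcover : (Set.univ : Set (Set (E d))) ⊆ {s | s = ∅} ∪ occupied := by
    intro s _
    rcases s.eq_empty_or_nonempty with hs | ⟨u, hu⟩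
    · exact Or.inl hs
    · refine Or.inr (Set.mem_biUnion (Set.mem_range_self u) fun hs => ?_)
      exact Set.eq_empty_iff_forall_notMem.1 hs u ⟨hu, mem_roundPt_vadd_lam0 u⟩
  have hnull : P occupied = 0 :=
    (measure_biUnion_null_iff countable_range_roundPt).2 fun z _ => by
      rw [← preimage_shift_voidSet, ← Set.preimage_compl]
      exact nonpos_iff_eq_zero.1 ((hP.measure_shift_preimage_le _ _).trans hcompl.le)
  simpa using measure_mono_null hcover (measure_union_null hempty hnull)

theorem IsStationary.exists_voidSet_decay (hP : IsStationary P) (hint : Integrable voidInd P)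
    {n : ℕ} (hn : 1 ≤ n) (hm : tailSigma d n ≤ m0) {γ : ℝ} (hγ0 : 0 < γ) (hγ1 : γ < 1)
    (hφ : ∀ᵐ s ∂P, P[voidInd | tailSigma d n] s ≤ γ) :
    ∃ c : ℝ, 0 < c ∧ ∀ ℓ : ℝ, 1 ≤ ℓ →
      P (voidSet (lam0 ℓ)) ≤ ENNReal.ofReal (Real.exp (-(c * ℓ ^ d))) := by
  set M : ℝ := 2 * n + 1
  have hM : 0 < M := by positivity
  refine ⟨-Real.log γ / (2 * M) ^ d, div_pos (neg_pos.2 (Real.log_neg hγ0 hγ1)) (by positivity),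
    fun ℓ hℓ => ?_⟩
  have hsingle : P (voidSet (lam0 ℓ)) ≤ ENNReal.ofReal γ :=
    calc P (voidSet (lam0 ℓ)) ≤ P (voidSet (lam0 (1 / 2)) ∩ Set.univ) := by
          rw [Set.inter_univ]; exact measure_mono (voidSet_anti (lam0_mono (by linarith)))
      _ ≤ ENNReal.ofReal γ := by
          simpa using measure_voidSet_half_inter_le hm hint hγ0.le hφ MeasurableSet.univ
  have hgrid : P (voidSet (lam0 ℓ)) ≤ ENNReal.ofReal γ ^ (⌊ℓ / M⌋₊ ^ d) := by
    rw [← card_grid hM.ne']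
    refine (measure_mono (voidSet_subset_biInter_grid (by linarith) ?_)).trans
      (hP.measure_biInter_shift_preimage_le
        (hP.measure_latticeVoid_inter_le hn hm hint hγ0.le hφ) _ (grid_pairwise hM.le _))
    exact (le_div_iff₀' hM).1 (Nat.floor_le (by positivity))
  have hmax : P (voidSet (lam0 ℓ)) ≤ ENNReal.ofReal γ ^ max 1 (⌊ℓ / M⌋₊ ^ d) := by
    rcases max_choice 1 (⌊ℓ / M⌋₊ ^ d) with h | h <;> rw [h]
    exacts [by simpa using hsingle, hgrid]
  refine hmax.trans ?_
  rw [← ENNReal.ofReal_pow hγ0.le]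
  refine ENNReal.ofReal_le_ofReal (pow_le_exp_neg_mul_pow hγ0 hγ1 (by positivity) ?_)
  rw [mul_comm, ← div_div]
  exact div_two_pow_le_max_floor_pow (by positivity) d

end Probability

end VoidProbability

open VoidProbability in
theorem stmt12_general (d : ℕ) [MeasurableSpace (Set (E d))]
    (P : Measure (Set (E d))) [IsProbabilityMeasure P]
    (hstat : ∀ x : E d, Measure.map (shift x) P = P)
    (hempty : P {s | s = ∅} = 0)
    (hmix : ∀ ε : ℝ, 0 < ε → ∃ K : ℝ, ∀ k : ℝ, K ≤ k →
      ∀ᵐ s ∂P, |MeasureTheory.condExp (tailSigma d k) P voidInd s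
          - (P {s : Set (E d) | s ∩ lam0 (1/2) = ∅}).toReal| ≤ ε) :
    ∃ c : ℝ, 0 < c ∧ ∀ ℓ : ℝ, 1 ≤ ℓ →
      P {s | s ∩ lam0 ℓ = ∅} ≤ ENNReal.ofReal (Real.exp (-(c * ℓ ^ d))) := by
  have hP : IsStationary P := hstat
  set q := (P {s : Set (E d) | s ∩ lam0 (1/2) = ∅}).toReal
  rcases (ENNReal.toReal_nonneg : 0 ≤ q).eq_or_lt with hq0 | hq0
  · have hV : P (voidSet (lam0 (1 / 2))) = 0 :=
      ((ENNReal.toReal_eq_zero_iff _).1 hq0.symm).resolve_right (measure_ne_top _ _)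
    exact ⟨1, one_pos, fun ℓ hℓ =>
      (measure_mono_null (voidSet_anti (lam0_mono (by linarith))) hV).trans_le zero_le⟩
  -- the conditional expectation stays near `q > 0`, so it is not the junk value `0`
  have hregular : ∀ {ε k : ℝ}, ε < q → (∀ᵐ s ∂P, |P[voidInd | tailSigma d k] s - q| ≤ ε) →
      tailSigma d k ≤ ‹_› ∧ Integrable voidInd P := fun hε h =>
    le_and_integrable_of_ae_condExp_ne_zero <| h.mono fun s hs h0 => by
      rw [h0, zero_sub, abs_neg, abs_of_pos hq0] at hs
      linarith
  obtain ⟨K₀, hK₀⟩ := hmix (q / 2) (half_pos hq0)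
  have hint := (hregular (half_lt_self hq0) (hK₀ K₀ le_rfl)).2
  have hq1 : q < 1 := by
    refine lt_of_le_of_ne ?_ fun h => hP.measure_voidSet_half_ne_one hempty hint ?_
    · exact ENNReal.toReal_le_of_le_ofReal zero_le_one (by simpa using prob_le_one)
    · exact (ENNReal.toReal_eq_one_iff _).1 h
  set ε := min q (1 - q) / 2 with hε_def
  have hε : 0 < ε := half_pos (lt_min hq0 (by linarith))
  obtain ⟨K, hK⟩ := hmix ε hε
  set n := max ⌈K⌉₊ 1
  have hae := hK n ((Nat.le_ceil K).trans (by exact_mod_cast le_max_left _ _))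
  refine hP.exists_voidSet_decay hint (le_max_right _ _)
    (hregular (by linarith [min_le_left q (1 - q), hε_def]) hae).1 (γ := q + ε) (by linarith)
    (by linarith [min_le_right q (1 - q), hε_def]) (hae.mono fun s hs => ?_)
  linarith [(abs_le.1 hs).2]

/-- if the conditional void probability of `Λ_{1/2}` given the configuration
outside `Λ_k` converges uniformly (in sup norm) to the unconditional void probability, then
void probabilities decay like `e^{-cℓ^d}`. -/
theorem stmt12 (d : ℕ) [MeasurableSpace (Set (E d))]
    (P : Measure (Set (E d))) [IsProbabilityMeasure P]
    (hsimple : P {s | ¬ locFin s} = 0)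
    (hstat : ∀ x : E d, Measure.map (shift x) P = P)
    (hempty : P {s | s = ∅} = 0)
    (hmix : ∀ ε : ℝ, 0 < ε → ∃ K : ℝ, ∀ k : ℝ, K ≤ k →
      ∀ᵐ s ∂P, |MeasureTheory.condExp (tailSigma d k) P voidInd s
          - (P {s : Set (E d) | s ∩ lam0 (1/2) = ∅}).toReal| ≤ ε) :
    ∃ c : ℝ, 0 < c ∧ ∀ ℓ : ℝ, 1 ≤ ℓ →
      P {s | s ∩ lam0 ℓ = ∅} ≤ ENNReal.ofReal (Real.exp (-(c * ℓ ^ d))) :=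
  stmt12_general d P hstat hempty hmix
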